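/- Assume n + n' is even and τ ≥ 0. Let Λ ∈ S_{n,δ} with Υ(Λ) = (μ;ν), ν = (ν_1, …, ν_{m_2}), and let Λ'_0 ∈ S_{n',δ'} be the class with Υ(Λ'_0) = ((ν_1 + τ, ν_2, …, ν_{m_2}); μ). Then Λ'_0 ∈ Θ(Λ)_0, and Λ'_0 ∉ Θ(Λ'') for every Λ'' ∈ S_{n,δ} with Λ'' < Λ. -/

import Mathlib

namespace PanUnitary

/-- `part μ i` : the `i`-th largest element (0-indexed) of the multiset `μ`, `0` beyond.
Viewing a multiset of naturals as a partition (identified up to trailing zeros),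
this is the `(i+1)`-st part. -/
def part (μ : Multiset ℕ) (i : ℕ) : ℕ := ((μ.sort (· ≤ ·)).reverse).getD i 0

/-- Remove the zero parts: the canonical (zero-free) representative of a partition. -/
def strip (μ : Multiset ℕ) : Multiset ℕ := μ.filter (fun x => 0 < x)

/-- `transpose μ j` is the `(j+1)`-st part of the transposed (conjugate) partition. -/
def transpose (μ : Multiset ℕ) (j : ℕ) : ℕ := (μ.filter (fun x => j < x)).card

/-- `Preceq f g` : the partition whose parts are given by `f` is `⪯` the one given by `g`,
i.e. `g i - 1 ≤ f i ≤ g i` for all `i`. -/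
def Preceq (f g : ℕ → ℕ) : Prop := ∀ i, g i ≤ f i + 1 ∧ f i ≤ g i

/-- An integer `δ` is admissible if it is even and nonnegative, or odd and negative. -/
def IsAdmissible (δ : ℤ) : Prop := (Even δ ∧ 0 ≤ δ) ∨ (Odd δ ∧ δ < 0)

/-- `ε = 1` if `δ` is even, `ε = 0` if `δ` is odd. -/
def eps (δ : ℤ) : ℕ := if Even δ then 1 else 0

/-- `d (d + 1) / 2` where `d = |δ|`. -/
def halfTri (δ : ℤ) : ℕ := δ.natAbs * (δ.natAbs + 1) / 2

/-- A symbol: a pair of rows of natural numbers (the strict-decrease condition is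
part of the predicate `Symbol.IsUnitary`). -/
structure Symbol where
  A : List ℕ
  B : List ℕ

def Symbol.defect (Λ : Symbol) : ℤ := (Λ.A.length : ℤ) - (Λ.B.length : ℤ)

/-- The row `(a_1, …, a_m)` gives the partition with parts `(a_i - e)/2 - (m - i)`. -/
def upsRow (L : List ℕ) (e : ℕ) : Multiset ℕ :=
  ((L.mapIdx fun i a => (a - e) / 2 - (L.length - 1 - i) : List ℕ) : Multiset ℕ)

/-- The bipartition `Υ(Λ)` (canonical zero-free representatives). -/
def Symbol.Upsilon (Λ : Symbol) : Multiset ℕ × Multiset ℕ :=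
  (strip (upsRow Λ.A (eps Λ.defect)), strip (upsRow Λ.B (1 - eps Λ.defect)))

/-- `Λ` is a unitary-type symbol of (admissible) defect `δ`. -/
def Symbol.IsUnitary (Λ : Symbol) (δ : ℤ) : Prop :=
  Λ.A.Pairwise (· > ·) ∧ Λ.B.Pairwise (· > ·) ∧ Λ.defect = δ ∧
    (∀ a ∈ Λ.A, a % 2 = eps δ) ∧ (∀ b ∈ Λ.B, b % 2 = 1 - eps δ)

/-- The rank `2(|μ| + |ν|) + d(d+1)/2` of a unitary-type symbol. -/
def Symbol.rank (Λ : Symbol) : ℕ :=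
  2 * (Λ.Upsilon.1.sum + Λ.Upsilon.2.sum) + halfTri Λ.defect

/-- Equivalence of symbols: same defect and same `Υ`. -/
def Symbol.Equiv (Λ Λ' : Symbol) : Prop :=
  Λ.defect = Λ'.defect ∧ Λ.Upsilon = Λ'.Upsilon

/-- Membership in `S_{n,δ}`: a unitary-type symbol of admissible defect `δ` and rank `n`. -/
def InS (n : ℕ) (δ : ℤ) (Λ : Symbol) : Prop :=
  IsAdmissible δ ∧ Λ.IsUnitary δ ∧ Λ.rank = n

/-- `Σ min(x,y)` over all unordered pairs of (positions of) entries of the list. -/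
def pairMinSum : List ℕ → ℕ
  | [] => 0
  | x :: xs => (xs.map (fun y => min x y)).sum + pairMinSum xs

/-- All entries of a symbol (both rows). -/
def Symbol.entries (Λ : Symbol) : List ℕ := Λ.A ++ Λ.B

/-- `ord(Λ) = Σ min(x,y) − Σ_{i=1}^{⌊N/2⌋} (N − 2i)²`. -/
def Symbol.ord (Λ : Symbol) : ℤ :=
  (pairMinSum Λ.entries : ℤ) -
    ∑ i ∈ Finset.Icc 1 (Λ.entries.length / 2),
      ((Λ.entries.length : ℤ) - 2 * (i : ℤ)) ^ 2

/-- The shift of a unitary-type symbol. -/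
def Symbol.shift (Λ : Symbol) : Symbol :=
  ⟨Λ.A.map (fun a => a + 2) ++ [eps Λ.defect],
   Λ.B.map (fun b => b + 2) ++ [1 - eps Λ.defect]⟩

/-- The defect `δ'` for the second member of the dual pair. -/
def deltaPrime (n n' : ℕ) (δ : ℤ) : ℤ :=
  if Even (n + n') then (if δ = 0 then 0 else -δ + 1) else -δ - 1

/-- `τ = ((n' − d'(d'+1)/2) − (n − d(d+1)/2)) / 2`. -/
def tau (n n' : ℕ) (δ : ℤ) : ℚ :=
  (((n' : ℚ) - (halfTri (deltaPrime n n' δ) : ℚ)) - ((n : ℚ) - (halfTri δ : ℚ))) / 2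

/-- `τ` as a natural number (equal to `τ` whenever `τ` is a nonnegative integer). -/
def tauNat (n n' : ℕ) (δ : ℤ) : ℕ :=
  ((n' + halfTri δ) - (n + halfTri (deltaPrime n n' δ))) / 2

/-- The set of (canonical, zero-free) bipartitions `(μ;ν)` with
`2(|μ|+|ν|) + d(d+1)/2 = n`; equivalently `|μ|+|ν| = (n − d(d+1)/2)/2`. -/
def BipSet (n : ℕ) (δ : ℤ) : Set (Multiset ℕ × Multiset ℕ) :=
  {p | (∀ x ∈ p.1, 0 < x) ∧ (∀ x ∈ p.2, 0 < x) ∧ 2 * (p.1.sum + p.2.sum) + halfTri δ = n}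

/-- The `⪯`-conditions (on transposes) defining the relation `Θ`, at the level of
bipartitions `p = Υ(Λ)`, `q = Υ(Λ')`. -/
def PrecCond (n n' : ℕ) (p q : Multiset ℕ × Multiset ℕ) : Prop :=
  if Even (n + n') then
    Preceq (transpose p.2) (transpose q.1) ∧ Preceq (transpose q.2) (transpose p.1)
  else
    Preceq (transpose p.1) (transpose q.2) ∧ Preceq (transpose q.1) (transpose p.2)

/-- `Θ` at the level of bipartitions (classes of symbols). -/
def ThetaB (n n' : ℕ) (δ : ℤ) (p q : Multiset ℕ × Multiset ℕ) : Prop :=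
  q ∈ BipSet n' (deltaPrime n n' δ) ∧ PrecCond n n' p q

/-- `Λ' ∈ Θ(Λ)` for symbols, where `Λ ∈ S_{n,δ}`. -/
def InTheta (n n' : ℕ) (δ : ℤ) (Λ Λ' : Symbol) : Prop :=
  InS n' (deltaPrime n n' δ) Λ' ∧ PrecCond n n' Λ.Upsilon Λ'.Upsilon

/-- `Λ' ∈ Θ(Λ)_k`. -/
def InThetaK (n n' : ℕ) (δ : ℤ) (k : ℕ) (Λ Λ' : Symbol) : Prop :=
  InTheta n n' δ Λ Λ' ∧
    (if Even (n + n') then (Λ'.Upsilon.2.sum : ℤ) = (Λ.Upsilon.1.sum : ℤ) - (k : ℤ)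
     else (Λ'.Upsilon.1.sum : ℤ) = (Λ.Upsilon.2.sum : ℤ) - (k : ℤ))

/-- Remove (one copy of) the largest part. -/
def mtail (μ : Multiset ℕ) : Multiset ℕ := μ.erase (part μ 0)

/-- `θ_k` at the level of bipartitions:
even case: `(μ;ν) ↦ (sort(ν, τ+k); sort(μ_2, …, μ_{m_1}, μ_1 − k))`;
odd case: `(μ;ν) ↦ (sort(ν_2, …, ν_{m_2}, ν_1 − k); sort(μ, τ+k))`. -/
def thetaBip (n n' : ℕ) (δ : ℤ) (k : ℕ) (p : Multiset ℕ × Multiset ℕ) :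
    Multiset ℕ × Multiset ℕ :=
  if Even (n + n') then
    (strip ((tauNat n n' δ + k) ::ₘ p.2), strip ((part p.1 0 - k) ::ₘ mtail p.1))
  else
    (strip ((part p.2 0 - k) ::ₘ mtail p.2), strip ((tauNat n n' δ + k) ::ₘ p.1))

/-- The unitary-type symbol of defect `δ` with `Υ = p`, whose first row has `m1`
entries and second row `m2` entries (valid whenever `m1, m2` are large enough). -/
def symbolOfBip (δ : ℤ) (p : Multiset ℕ × Multiset ℕ) (m1 m2 : ℕ) : Symbol :=
  ⟨List.ofFn (fun i : Fin m1 => 2 * (part p.1 (i : ℕ) + (m1 - 1 - (i : ℕ))) + eps δ),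
   List.ofFn (fun j : Fin m2 => 2 * (part p.2 (j : ℕ) + (m2 - 1 - (j : ℕ))) + (1 - eps δ))⟩

/-- A canonical representative symbol of defect `δ` with `Υ = p`. -/
def canonicalSymbol (δ : ℤ) (p : Multiset ℕ × Multiset ℕ) : Symbol :=
  symbolOfBip δ p (max p.1.card ((p.2.card : ℤ) + δ).toNat)
    (((max p.1.card ((p.2.card : ℤ) + δ).toNat : ℤ) - δ).toNat)

/-- A symbol representing the class `θ_k(Λ)`. -/
def thetaSymbol (n n' : ℕ) (δ : ℤ) (k : ℕ) (Λ : Symbol) : Symbol :=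
  canonicalSymbol (deltaPrime n n' δ) (thetaBip n n' δ k Λ.Upsilon)

/-- `K(Λ)`: `μ_1` in the even case, `ν_1` in the odd case. -/
def bigK (n n' : ℕ) (Λ : Symbol) : ℕ :=
  if Even (n + n') then part Λ.Upsilon.1 0 else part Λ.Upsilon.2 0

/-- `ord` at the level of bipartitions (well defined on classes). -/
def ordB (δ : ℤ) (p : Multiset ℕ × Multiset ℕ) : ℤ := (canonicalSymbol δ p).ord

/-- Strict lexicographic order on partitions. -/
def PartLexLt (μ ν : Multiset ℕ) : Prop :=
  ∃ i, (∀ j < i, part μ j = part ν j) ∧ part μ i < part ν i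

/-- The total order on `S_{n,δ}` (and on `S_{n',δ'}`), at the level of bipartitions;
it depends only on the parity of `n + n'`. -/
def BLt (n n' : ℕ) (p q : Multiset ℕ × Multiset ℕ) : Prop :=
  if Even (n + n') then
    p.1.sum < q.1.sum ∨ (p.1.sum = q.1.sum ∧ PartLexLt p.1 q.1) ∨
      (p.1 = q.1 ∧ PartLexLt p.2 q.2)
  else
    p.2.sum < q.2.sum ∨ (p.2.sum = q.2.sum ∧ PartLexLt p.2 q.2) ∨
      (p.2 = q.2 ∧ PartLexLt p.1 q.1)

/-- `q ∈ Θ♭(p)` relative to a given partial function `bar` (playing the role of `θ̄`). -/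
def InFlat (n n' : ℕ) (δ : ℤ)
    (bar : Multiset ℕ × Multiset ℕ → Option (Multiset ℕ × Multiset ℕ))
    (p q : Multiset ℕ × Multiset ℕ) : Prop :=
  ThetaB n n' δ p q ∧ ∀ r ∈ BipSet n δ, BLt n n' r p → bar r ≠ some q

/-- `bar` is the partial function `θ̄` defined by recursion along the total order:
on each `p ∈ S_{n,δ}`, if `Θ♭(p) ≠ ∅` then `bar p` is defined and is the smallest
element (w.r.t. the total order) of maximal `ord` in `Θ♭(p)`. -/
def IsThetaBar (n n' : ℕ) (δ : ℤ)
    (bar : Multiset ℕ × Multiset ℕ → Option (Multiset ℕ × Multiset ℕ)) : Prop :=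
  (∀ p, p ∉ BipSet n δ → bar p = none) ∧
  ∀ p ∈ BipSet n δ,
    ((∃ q, InFlat n n' δ bar p q) → ∃ q, bar p = some q) ∧
    ∀ q, bar p = some q →
      InFlat n n' δ bar p q ∧
      (∀ r, InFlat n n' δ bar p r →
        ordB (deltaPrime n n' δ) r ≤ ordB (deltaPrime n n' δ) q) ∧
      (∀ r, InFlat n n' δ bar p r →
        ordB (deltaPrime n n' δ) r = ordB (deltaPrime n n' δ) q → r ≠ q → BLt n n' q r)

/-!
Everything is read off transposes. Raising the largest part `ν₁` of `ν` by `τ` adds one box to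
each of the columns `ν₁ + 1, …, ν₁ + τ`, so `νᵀ ⪯ (ν₁ + τ, ν₂, …)ᵀ`, while `μᵀ ⪯ μᵀ` trivially;
the rank comes out right because `d(d+1)/2` and `d'(d'+1)/2` have the same parity, so `τ` is an
integer. Conversely, if `Λ'₀ ∈ Θ(ρ; σ)` then `μᵀ ≤ ρᵀ` pointwise, hence `|μ| ≤ |ρ|`, and
`(ρ; σ) < (μ; ν)` forces `ρ = μ` (a partition with dominated transpose and the same size is equal).
Then `|σ| = |ν|` and `σ₁ ≤ ν₁`, so `σᵀ ≤ νᵀ` pointwise and again `σ = ν`.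
-/

lemma sum_strip (μ : Multiset ℕ) : (strip μ).sum = μ.sum := by
  conv_rhs => rw [← Multiset.filter_add_not (0 < ·) μ]
  rw [strip, Multiset.sum_add, left_eq_add, Multiset.sum_eq_zero]
  intro x hx
  simpa using (Multiset.mem_filter.mp hx).2

lemma pos_of_mem_strip {μ : Multiset ℕ} {x : ℕ} (hx : x ∈ strip μ) : 0 < x :=
  (Multiset.mem_filter.mp hx).2

section Part

lemma part_empty (i : ℕ) : part 0 i = 0 := by simp [part]

lemma le_part_zero {μ : Multiset ℕ} {x : ℕ} (hx : x ∈ μ) : x ≤ part μ 0 := by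
  have hsorted : ((μ.sort (· ≤ ·)).reverse).Pairwise (· ≥ ·) :=
    List.pairwise_reverse.mpr (Multiset.pairwise_sort _ _)
  have hmem : x ∈ (μ.sort (· ≤ ·)).reverse := by simpa using hx
  unfold part
  generalize (μ.sort (· ≤ ·)).reverse = L at hsorted hmem
  cases L with
  | nil => simp at hmem
  | cons a l =>
    rcases List.mem_cons.mp hmem with rfl | h
    · exact le_rfl
    · exact List.rel_of_pairwise_cons hsorted h

lemma part_zero_mem {μ : Multiset ℕ} (h : μ ≠ 0) : part μ 0 ∈ μ := by
  have hne : (μ.sort (· ≤ ·)).reverse ≠ [] := by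
    simpa [← Multiset.coe_eq_zero, Multiset.sort_eq] using h
  obtain ⟨a, l, hL⟩ := List.exists_cons_of_ne_nil hne
  have ha : a ∈ (μ.sort (· ≤ ·)).reverse := hL ▸ List.mem_cons_self
  rw [part, hL]
  simpa using ha

lemma part_zero_cons_mtail {μ : Multiset ℕ} (h : μ ≠ 0) : part μ 0 ::ₘ mtail μ = μ :=
  Multiset.cons_erase (part_zero_mem h)

lemma PartLexLt.irrefl (μ : Multiset ℕ) : ¬ PartLexLt μ μ :=
  fun ⟨_, _, hi⟩ => lt_irrefl _ hi

lemma PartLexLt.part_zero_le {μ ν : Multiset ℕ} (h : PartLexLt μ ν) : part μ 0 ≤ part ν 0 := by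
  obtain ⟨i, hj, hi⟩ := h
  rcases Nat.eq_zero_or_pos i with rfl | hpos
  · exact hi.le
  · exact (hj 0 hpos).le

end Part

section Transpose

lemma transpose_zero (j : ℕ) : transpose 0 j = 0 := rfl

lemma transpose_cons (a : ℕ) (s : Multiset ℕ) (j : ℕ) :
    transpose (a ::ₘ s) j = (if j < a then 1 else 0) + transpose s j := by
  rw [transpose, transpose, Multiset.filter_cons]
  split_ifs <;> simp [Nat.add_comm]

lemma transpose_strip (μ : Multiset ℕ) (j : ℕ) : transpose (strip μ) j = transpose μ j := by
  rw [transpose, transpose, strip, Multiset.filter_filter]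
  congr 1
  exact Multiset.filter_congr fun x _ => and_iff_left_of_imp j.zero_le.trans_lt

lemma transpose_eq_zero {μ : Multiset ℕ} {j : ℕ} (h : ∀ x ∈ μ, x ≤ j) : transpose μ j = 0 := by
  simpa [transpose, Multiset.filter_eq_nil] using h

lemma transpose_eq_count_add (μ : Multiset ℕ) (k : ℕ) :
    transpose μ k = μ.count (k + 1) + transpose μ (k + 1) := by
  induction μ using Multiset.induction with
  | empty => rfl
  | cons a s ih =>
    rw [transpose_cons, transpose_cons, Multiset.count_cons, ih]
    split_ifs <;> omega

lemma sum_range_transpose {μ : Multiset ℕ} {N : ℕ} (h : ∀ x ∈ μ, x ≤ N) :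
    ∑ j ∈ Finset.range N, transpose μ j = μ.sum := by
  induction μ using Multiset.induction with
  | empty => simp [transpose_zero]
  | cons a s ih =>
    rw [Multiset.forall_mem_cons] at h
    have hrange : (Finset.range N).filter (· < a) = Finset.range a := by
      ext j
      simp only [Finset.mem_filter, Finset.mem_range]
      omega
    simp only [transpose_cons, Finset.sum_add_distrib, ih h.2, Multiset.sum_cons,
      Finset.sum_boole, hrange, Finset.card_range, Nat.cast_id]

lemma eq_of_transpose_eq {μ ν : Multiset ℕ} (hμ : ∀ x ∈ μ, 0 < x) (hν : ∀ x ∈ ν, 0 < x)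
    (h : ∀ j, transpose μ j = transpose ν j) : μ = ν := by
  ext (_ | k)
  · rw [Multiset.count_eq_zero.mpr (fun h0 => (hμ 0 h0).false),
      Multiset.count_eq_zero.mpr (fun h0 => (hν 0 h0).false)]
  · have hμk := transpose_eq_count_add μ k
    have hνk := transpose_eq_count_add ν k
    rw [h k, h (k + 1)] at hμk
    omega

lemma sum_le_sum_of_transpose_le {μ ν : Multiset ℕ} (h : ∀ j, transpose μ j ≤ transpose ν j) :
    μ.sum ≤ ν.sum := by
  have hμ : ∀ x ∈ μ, x ≤ part μ 0 + part ν 0 := fun x hx => (le_part_zero hx).trans le_self_add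
  have hν : ∀ x ∈ ν, x ≤ part μ 0 + part ν 0 := fun x hx => (le_part_zero hx).trans le_add_self
  rw [← sum_range_transpose hμ, ← sum_range_transpose hν]
  exact Finset.sum_le_sum fun j _ => h j

/-- Both transposes sum to the common size over `range N` for large `N`, so pointwise
domination forces equality. -/
lemma eq_of_transpose_le_of_sum_eq {μ ν : Multiset ℕ} (hμ : ∀ x ∈ μ, 0 < x)
    (hν : ∀ x ∈ ν, 0 < x) (hle : ∀ j, transpose μ j ≤ transpose ν j) (hsum : μ.sum = ν.sum) :
    μ = ν := by
  set N := part μ 0 + part ν 0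
  have hμN : ∀ x ∈ μ, x ≤ N := fun x hx => (le_part_zero hx).trans le_self_add
  have hνN : ∀ x ∈ ν, x ≤ N := fun x hx => (le_part_zero hx).trans le_add_self
  have hbelow : ∀ j ∈ Finset.range N, transpose μ j = transpose ν j := by
    rw [← Finset.sum_eq_sum_iff_of_le fun j _ => hle j, sum_range_transpose hμN,
      sum_range_transpose hνN, hsum]
  refine eq_of_transpose_eq hμ hν fun j => ?_
  rcases Nat.lt_or_ge j N with hj | hj
  · exact hbelow j (Finset.mem_range.mpr hj)
  · rw [transpose_eq_zero fun x hx => (hμN x hx).trans hj,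
      transpose_eq_zero fun x hx => (hνN x hx).trans hj]

end Transpose

section AddLargest

/-- The partition `(ν₁ + t, ν₂, ν₃, …)`. -/
def addLargest (ν : Multiset ℕ) (t : ℕ) : Multiset ℕ := strip ((part ν 0 + t) ::ₘ mtail ν)

lemma sum_addLargest (ν : Multiset ℕ) (t : ℕ) : (addLargest ν t).sum = ν.sum + t := by
  rw [addLargest, sum_strip, Multiset.sum_cons]
  rcases eq_or_ne ν 0 with rfl | hν
  · simp [part_empty, mtail]
  · have hsplit := congrArg Multiset.sum (part_zero_cons_mtail hν)
    rw [Multiset.sum_cons] at hsplit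
    omega

lemma transpose_addLargest (ν : Multiset ℕ) (t j : ℕ) :
    transpose (addLargest ν t) j
      = transpose ν j + if part ν 0 ≤ j ∧ j < part ν 0 + t then 1 else 0 := by
  rw [addLargest, transpose_strip, transpose_cons]
  rcases eq_or_ne ν 0 with rfl | hν
  · simp only [part_empty, mtail, Multiset.erase_zero, transpose_zero]
    split_ifs <;> omega
  · have hsplit := congrArg (transpose · j) (part_zero_cons_mtail hν)
    simp only [transpose_cons] at hsplit
    split_ifs at hsplit ⊢ <;> omega

lemma transpose_le_transpose_addLargest (ν : Multiset ℕ) (t j : ℕ) :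
    transpose ν j ≤ transpose (addLargest ν t) j ∧
      transpose (addLargest ν t) j ≤ transpose ν j + 1 := by
  rw [transpose_addLargest]
  split_ifs <;> omega

/-- Below `ν₁` the transposes of `ν` and `addLargest ν t` agree, and a partition with largest
part at most `ν₁` has vanishing transpose from `ν₁` on. -/
lemma eq_of_transpose_le_addLargest {ρ ν : Multiset ℕ} {t : ℕ} (hρ : ∀ x ∈ ρ, 0 < x)
    (hν : ∀ x ∈ ν, 0 < x) (hpart : part ρ 0 ≤ part ν 0) (hsum : ρ.sum = ν.sum)
    (hle : ∀ j, transpose ρ j ≤ transpose (addLargest ν t) j) : ρ = ν := by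
  refine eq_of_transpose_le_of_sum_eq hρ hν (fun j => ?_) hsum
  rcases Nat.lt_or_ge j (part ν 0) with hj | hj
  · simpa [transpose_addLargest, hj.not_ge] using hle j
  · rw [transpose_eq_zero fun x hx => (le_part_zero hx).trans (hpart.trans hj)]
    exact Nat.zero_le _

end AddLargest

lemma halfTri_mod_two_eq {δ δ' : ℤ} (hodd : Odd δ.natAbs) (h : δ'.natAbs = δ.natAbs + 1) :
    halfTri δ' % 2 = halfTri δ % 2 := by
  obtain ⟨f, hf⟩ := hodd
  have hmul : (δ.natAbs + 1) * (δ.natAbs + 1 + 1)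
      = δ.natAbs * (δ.natAbs + 1) + 2 * (δ.natAbs + 1) := by ring
  rw [halfTri, halfTri, h, hmul, Nat.add_mul_div_left _ _ two_pos]
  omega

lemma halfTri_deltaPrime_mod_two {n n' : ℕ} {δ : ℤ} (hδ : IsAdmissible δ)
    (hpar : Even (n + n')) :
    halfTri (deltaPrime n n' δ) % 2 = halfTri δ % 2 := by
  rw [deltaPrime, if_pos hpar]
  split_ifs with h0
  · rw [h0]
  rcases hδ with ⟨⟨c, hc⟩, hpos⟩ | ⟨⟨c, hc⟩, hneg⟩
  · exact (halfTri_mod_two_eq ⟨c.toNat - 1, by omega⟩ (by omega)).symm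
  · exact halfTri_mod_two_eq ⟨(-c - 1).toNat, by omega⟩ (by omega)

lemma two_mul_tauNat_add {n n' : ℕ} {δ : ℤ} (hδ : IsAdmissible δ) (hpar : Even (n + n'))
    (hτ : 0 ≤ tau n n' δ) :
    2 * tauNat n n' δ + (n + halfTri (deltaPrime n n' δ)) = n' + halfTri δ := by
  have hle : n + halfTri (deltaPrime n n' δ) ≤ n' + halfTri δ := by
    rw [tau] at hτ
    exact_mod_cast (by linarith : (n : ℚ) + halfTri (deltaPrime n n' δ) ≤ n' + halfTri δ)
  have hmod := halfTri_deltaPrime_mod_two hδ hpar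
  obtain ⟨m, hm⟩ := hpar
  rw [tauNat]
  omega

lemma not_bLt_of_transpose_le {n n' t : ℕ} (hpar : Even (n + n')) {μ ν ρ σ : Multiset ℕ}
    (hμ : ∀ x ∈ μ, 0 < x) (hν : ∀ x ∈ ν, 0 < x) (hρ : ∀ x ∈ ρ, 0 < x) (hσ : ∀ x ∈ σ, 0 < x)
    (hsum : ρ.sum + σ.sum = μ.sum + ν.sum) (hμρ : ∀ j, transpose μ j ≤ transpose ρ j)
    (hσν : ∀ j, transpose σ j ≤ transpose (addLargest ν t) j) :
    ¬ BLt n n' (ρ, σ) (μ, ν) := by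
  have hμρsum := sum_le_sum_of_transpose_le hμρ
  rw [BLt, if_pos hpar]
  dsimp only
  rintro (hlt | ⟨hρsum, hlex⟩ | ⟨rfl, hlex⟩)
  · exact absurd hlt (not_lt.mpr hμρsum)
  · rw [eq_of_transpose_le_of_sum_eq hμ hρ hμρ hρsum.symm] at hlex
    exact PartLexLt.irrefl _ hlex
  · rw [eq_of_transpose_le_addLargest hσ hν hlex.part_zero_le (by omega) hσν] at hlex
    exact PartLexLt.irrefl _ hlex

/-- The element `Λ'₀` with `Υ(Λ'₀) = ((ν₁ + τ, ν₂, …, ν_{m₂}); μ)` lies in `Θ(Λ)_0`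
and in no `Θ(Λ'')` with `Λ'' < Λ`. -/
theorem statement11 (n n' : ℕ) (δ : ℤ) (hδ : IsAdmissible δ)
    (hpar : Even (n + n')) (hτ : 0 ≤ tau n n' δ)
    (p : Multiset ℕ × Multiset ℕ) (hp : p ∈ BipSet n δ)
    (q : Multiset ℕ × Multiset ℕ)
    (hq : q = (strip ((part p.2 0 + tauNat n n' δ) ::ₘ mtail p.2), p.1)) :
    (ThetaB n n' δ p q ∧ q.2.sum = p.1.sum) ∧
    ∀ r ∈ BipSet n δ, BLt n n' r p → ¬ ThetaB n n' δ r q := by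
  obtain ⟨hμ, hν, hn⟩ := hp
  have hτN := two_mul_tauNat_add hδ hpar hτ
  have hsum := sum_addLargest p.2 (tauNat n n' δ)
  subst hq
  refine ⟨⟨⟨⟨fun _ => pos_of_mem_strip, hμ, ?_⟩, ?_⟩, rfl⟩, ?_⟩
  · change 2 * ((addLargest p.2 _).sum + p.1.sum) + _ = n'
    omega
  · rw [PrecCond, if_pos hpar]
    exact ⟨fun j => (transpose_le_transpose_addLargest p.2 _ j).symm,
      fun j => ⟨Nat.le_succ _, le_rfl⟩⟩
  · rintro ⟨ρ, σ⟩ ⟨hρ, hσ, hrn⟩ hlt ⟨-, hprec⟩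
    rw [PrecCond, if_pos hpar] at hprec
    exact not_bLt_of_transpose_le hpar hμ hν hρ hσ (by omega) (fun j => (hprec.2 j).2)
      (fun j => (hprec.1 j).2) hlt

end PanUnitary
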